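/- arXiv:1801.10445 — 6 statements merged into one kernel-verified Lean document; each statement's English description precedes it below -/
import Mathlib

section
/- Let n+1 = 2m with m ≥ 2 and ω = exp(2πi/(n+1)). For ℓ ∈ {0,1,n} let R_ℓ be the set of ordered pairs (i,j) with 0 ≤ i,j ≤ n, i ≠ j, such that ω^j − ω^i = r·exp(−(ℓ+1)πi/(n+1)) for some real r > 0. If m = 2c then: R_0 = {(2c−1,0),(2c−2,1),…,(c,c−1)} ∪ {(2c,4c−1),(2c+1,4c−2),…,(3c−1,3c)}; R_1 = {(2c−1,4c−1),(2c,4c−2),…,(3c−2,3c)} ∪ {(2c−2,0),(2c−3,1),…,(c,c−2)}; R_n = {(4c−1,2c+1),(4c−2,2c+2),…,(3c+1,3c−1)} ∪ {(0,2c),(1,2c−1),…,(c−1,c+1)}. If m = 2c+1 then: R_0 = {(2c+1,4c+1),(2c+2,4c),…,(3c,3c+2)} ∪ {(2c,0),(2c−1,1),…,(c+1,c−1)}; R_1 = {(2c−1,0),(2c−2,1),…,(c,c−1)} ∪ {(2c,4c+1),(2c+1,4c),…,(3c,3c+1)}; R_n = {(0,2c+1),(1,2c),…,(c,c+1)} ∪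 {(4c+1,2c+2),(4c,2c+3),…,(3c+2,3c+1)}. -/
/-!
Multiplying by `exp ((ℓ + 1) π i / N)` (with `N = n + 1`) turns `ω ^ j` into `exp (x_j i)`,
`x_j = (2 j + ℓ + 1) π / N`. A difference `exp (x i) - exp (y i)` of unit vectors is a positive real
exactly when the two points are mirror images in the imaginary axis (`x + y ≡ π` mod `2π`) and
`exp (x i)` lies in the open right half-plane (`0 < cos x`). For `N = 2 m` and indices below `N`
this reads `i + j + ℓ + 1 ∈ {m, 3m, 5m}` and `2 j + ℓ + 1 ∈ [0, m) ∪ (3m, 5m)`, whose solutions for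
`ℓ ∈ {0, 1, n}` are the listed arithmetic progressions.
-/

open Real Complex

lemma exists_pos_eq_cexp_sub_cexp_iff (x y : ℝ) :
    (∃ r : ℝ, 0 < r ∧ cexp (x * I) - cexp (y * I) = r) ↔
      Real.sin x = Real.sin y ∧ Real.cos y < Real.cos x := by
  constructor
  · rintro ⟨r, hr, h⟩
    have him := congrArg im h
    have hre := congrArg re h
    simp only [sub_im, sub_re, exp_ofReal_mul_I_im, exp_ofReal_mul_I_re, ofReal_im,
      ofReal_re] at him hre
    exact ⟨by linarith, by linarith⟩
  · rintro ⟨hsin, hcos⟩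
    refine ⟨Real.cos x - Real.cos y, by linarith, Complex.ext ?_ ?_⟩
    · simp only [sub_re, exp_ofReal_mul_I_re, ofReal_re]
    · simp only [sub_im, exp_ofReal_mul_I_im, ofReal_im, hsin, sub_self]

lemma Real.sin_eq_sin_and_cos_lt_cos_iff (x y : ℝ) :
    Real.sin x = Real.sin y ∧ Real.cos y < Real.cos x ↔
      (∃ k : ℤ, x + y = (2 * k + 1) * π) ∧ 0 < Real.cos x := by
  constructor
  · rintro ⟨hsin, hcos⟩
    obtain ⟨k, rfl | rfl⟩ := Real.sin_eq_sin_iff.mp hsin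
    · rw [show 2 * k * π + x = x + k * (2 * π) by ring, Real.cos_add_int_mul_two_pi] at hcos
      exact absurd hcos (lt_irrefl _)
    · rw [show (2 * k + 1) * π - x = π - x + k * (2 * π) by ring, Real.cos_add_int_mul_two_pi,
        Real.cos_pi_sub] at hcos
      exact ⟨⟨k, by ring⟩, by linarith⟩
  · rintro ⟨⟨k, hk⟩, hcos⟩
    obtain rfl : y = π - x + k * (2 * π) := by linarith
    rw [Real.sin_add_int_mul_two_pi, Real.sin_pi_sub, Real.cos_add_int_mul_two_pi,
      Real.cos_pi_sub]
    exact ⟨rfl, by linarith⟩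

lemma Real.cos_pos_iff_of_mem_Ico {t : ℝ} (ht : t ∈ Set.Ico 0 (2 * π)) :
    0 < Real.cos t ↔ t < π / 2 ∨ 3 * π / 2 < t := by
  obtain ⟨h0, h2π⟩ := ht
  constructor
  · intro hcos
    by_contra! h
    linarith [Real.cos_nonpos_of_pi_div_two_le_of_le h.1 (by linarith [h.2])]
  · rintro (h | h)
    · exact Real.cos_pos_of_mem_Ioo ⟨by linarith [pi_pos], h⟩
    · rw [← Real.cos_sub_two_pi]
      exact Real.cos_pos_of_mem_Ioo ⟨by linarith, by linarith [pi_pos]⟩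

lemma Real.cos_nat_mul_pi_div_pos_iff (a M : ℕ) (hM : 0 < M) :
    0 < Real.cos (a * π / (2 * M)) ↔ a % (4 * M) < M ∨ 3 * M < a % (4 * M) := by
  set r := a % (4 * M)
  set q := a / (4 * M)
  have hdiv : (a : ℝ) = r + 4 * M * q := by exact_mod_cast (Nat.mod_add_div a (4 * M)).symm
  have hr : r < 4 * M := Nat.mod_lt _ (by omega)
  set θ := π / (2 * M) with hθdef
  have hθ : 0 < θ := by positivity
  have hπ : π = 2 * M * θ := by simp only [θ]; field_simp
  have ha : (a : ℝ) * π / (2 * M) = r * θ + q * (2 * π) := by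
    rw [mul_div_assoc, ← hθdef, hdiv, hπ]
    ring
  have hscale : ∀ s t : ℝ, s * θ < t * θ ↔ s < t := fun s t => mul_lt_mul_iff_of_pos_right hθ
  rw [ha, Real.cos_add_nat_mul_two_pi, Real.cos_pos_iff_of_mem_Ico]
  · rw [hπ, show 2 * M * θ / 2 = M * θ by ring, show 3 * (2 * M * θ) / 2 = (3 * M) * θ by ring,
      hscale, hscale]
    norm_cast
  · rw [hπ, show 2 * (2 * M * θ) = (4 * M : ℕ) * θ by push_cast; ring]
    exact ⟨by positivity, (hscale _ _).2 (by exact_mod_cast hr)⟩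

lemma cexp_two_pi_I_div_pow_mul_cexp (N j ℓ : ℕ) :
    cexp (2 * π * I / N) ^ j * cexp ((ℓ + 1) * π * I / N) =
      cexp (((2 * j + ℓ + 1 : ℕ) * π / N : ℝ) * I) := by
  rw [← Complex.exp_nat_mul, ← Complex.exp_add]
  push_cast
  ring_nf

lemma exists_pos_pow_sub_pow_eq_iff (N i j ℓ : ℕ) (hN : 0 < N) :
    (∃ r : ℝ, 0 < r ∧ cexp (2 * π * I / N) ^ j - cexp (2 * π * I / N) ^ i =
        r * cexp (-((ℓ + 1) * π * I) / N)) ↔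
      (∃ k : ℤ, 2 * ((i + j + ℓ + 1 : ℕ) : ℤ) = (2 * k + 1) * N) ∧
        0 < Real.cos ((2 * j + ℓ + 1 : ℕ) * π / N) := by
  have hrot : ∀ z : ℂ, ∀ r : ℝ, z = r * cexp (-((ℓ + 1) * π * I) / N) ↔
      z * cexp ((ℓ + 1) * π * I / N) = r := fun z r => by
    rw [neg_div, Complex.exp_neg, eq_mul_inv_iff_mul_eq₀ (Complex.exp_ne_zero _)]
  simp only [hrot, sub_mul, cexp_two_pi_I_div_pow_mul_cexp]
  rw [exists_pos_eq_cexp_sub_cexp_iff, Real.sin_eq_sin_and_cos_lt_cos_iff]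
  have hN' : (0 : ℝ) < N := by exact_mod_cast hN
  refine and_congr_left' (exists_congr fun k => ?_)
  have hθ : π / N ≠ 0 := by positivity
  have hlhs : ((2 * j + ℓ + 1 : ℕ) : ℝ) * π / N + ((2 * i + ℓ + 1 : ℕ) : ℝ) * π / N =
      ((2 * ((i + j + ℓ + 1 : ℕ) : ℤ) : ℤ) : ℝ) * (π / N) := by push_cast; ring
  have hrhs : (2 * k + 1) * π = (((2 * k + 1) * N : ℤ) : ℝ) * (π / N) := by
    push_cast; field_simp
  rw [hlhs, hrhs, mul_left_inj' hθ, Int.cast_inj]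

lemma exists_two_mul_eq_odd_mul_two_mul_iff (s m : ℕ) (hs : 0 < s) (hsm : s < 6 * m) :
    (∃ k : ℤ, 2 * (s : ℤ) = (2 * k + 1) * (2 * m : ℕ)) ↔ s = m ∨ s = 3 * m ∨ s = 5 * m := by
  constructor
  · rintro ⟨k, hk⟩
    push_cast at hk
    have hk0 : 0 < 2 * k + 1 := by nlinarith
    have hk2 : 2 * k + 1 < 6 := by nlinarith
    obtain rfl | rfl | rfl : k = 0 ∨ k = 1 ∨ k = 2 := by omega
    all_goals omega
  · rintro (rfl | rfl | rfl)
    exacts [⟨0, by push_cast; ring⟩, ⟨1, by push_cast; ring⟩, ⟨2, by push_cast; ring⟩]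

lemma mod_four_mul_lt_or_lt_mod_iff (a m : ℕ) (ha : a < 7 * m) :
    a % (4 * m) < m ∨ 3 * m < a % (4 * m) ↔ a < m ∨ 3 * m < a ∧ a < 5 * m := by
  rcases lt_or_ge a (4 * m) with h | h
  · rw [Nat.mod_eq_of_lt h]
    omega
  · rw [Nat.mod_eq_sub_mod h, Nat.mod_eq_of_lt (by omega)]
    omega

def singularRoots (m ℓ : ℕ) : Set (ℕ × ℕ) :=
  {p | p.1 < 2 * m ∧ p.2 < 2 * m ∧
    (p.1 + p.2 + ℓ + 1 = m ∨ p.1 + p.2 + ℓ + 1 = 3 * m ∨ p.1 + p.2 + ℓ + 1 = 5 * m) ∧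
    (2 * p.2 + ℓ + 1 < m ∨ 3 * m < 2 * p.2 + ℓ + 1 ∧ 2 * p.2 + ℓ + 1 < 5 * m)}

lemma setOf_exists_pos_pow_sub_pow_eq_eq_singularRoots (n m ℓ : ℕ) (hnm : n + 1 = 2 * m)
    (hℓ : ℓ ≤ n) :
    {p : ℕ × ℕ | p.1 ≤ n ∧ p.2 ≤ n ∧ p.1 ≠ p.2 ∧
      ∃ r : ℝ, 0 < r ∧ cexp (2 * π * I / (n + 1)) ^ p.2 - cexp (2 * π * I / (n + 1)) ^ p.1 =
        (r : ℂ) * cexp (-(((ℓ : ℂ) + 1) * π * I) / (n + 1))} = singularRoots m ℓ := by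
  have hN : (n : ℂ) + 1 = ((2 * m : ℕ) : ℂ) := by exact_mod_cast hnm
  ext ⟨i, j⟩
  simp only [Set.mem_ofPred_eq, singularRoots, hN]
  have hm : 0 < m := by omega
  rw [exists_pos_pow_sub_pow_eq_iff _ _ _ _ (by omega), Nat.cast_mul (α := ℝ), Nat.cast_ofNat,
    Real.cos_nat_mul_pi_div_pos_iff _ _ hm]
  constructor
  · rintro ⟨hi, hj, -, hsum, hcos⟩
    rw [exists_two_mul_eq_odd_mul_two_mul_iff _ _ (by omega) (by omega)] at hsum
    rw [mod_four_mul_lt_or_lt_mod_iff _ _ (by omega)] at hcos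
    exact ⟨by omega, by omega, hsum, hcos⟩
  · rintro ⟨hi, hj, hsum, hcos⟩
    exact ⟨by omega, by omega, by omega,
      (exists_two_mul_eq_odd_mul_two_mul_iff _ _ (by omega) (by omega)).2 hsum,
      (mod_four_mul_lt_or_lt_mod_iff _ _ (by omega)).2 hcos⟩

lemma singularRoots_two_mul (c : ℕ) :
    singularRoots (2 * c) 0 =
        {p | ∃ t < c, p = (2*c - 1 - t, t)} ∪ {p | ∃ t < c, p = (2*c + t, 4*c - 1 - t)} ∧
      singularRoots (2 * c) 1 =
        {p | ∃ t < c, p = (2*c - 1 + t, 4*c - 1 - t)} ∪ {p | ∃ t < c - 1, p = (2*c - 2 - t, t)} ∧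
      singularRoots (2 * c) (4 * c - 1) =
        {p | ∃ t < c - 1, p = (4*c - 1 - t, 2*c + 1 + t)} ∪ {p | ∃ t < c, p = (t, 2*c - t)} := by
  refine ⟨?_, ?_, ?_⟩ <;> ext ⟨i, j⟩ <;>
    simp only [singularRoots, Set.mem_ofPred_eq, Set.mem_union, Prod.mk.injEq] <;> constructor
  · intro h
    by_cases hj : j < c
    · exact .inl ⟨j, hj, by omega, rfl⟩
    · exact .inr ⟨4*c - 1 - j, by omega, by omega, by omega⟩
  · rintro (⟨t, ht, rfl, rfl⟩ | ⟨t, ht, rfl, rfl⟩) <;> omega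
  · intro h
    by_cases hj : j + 2 ≤ c
    · exact .inr ⟨j, by omega, by omega, rfl⟩
    · exact .inl ⟨4*c - 1 - j, by omega, by omega, by omega⟩
  · rintro (⟨t, ht, rfl, rfl⟩ | ⟨t, ht, rfl, rfl⟩) <;> omega
  · intro h
    by_cases hj : j ≤ 2*c
    · exact .inr ⟨i, by omega, rfl, by omega⟩
    · exact .inl ⟨j - (2*c + 1), by omega, by omega, by omega⟩
  · rintro (⟨t, ht, rfl, rfl⟩ | ⟨t, ht, rfl, rfl⟩) <;> omega

lemma singularRoots_two_mul_add_one (c : ℕ) :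
    singularRoots (2 * c + 1) 0 =
        {p | ∃ t < c, p = (2*c + 1 + t, 4*c + 1 - t)} ∪ {p | ∃ t < c, p = (2*c - t, t)} ∧
      singularRoots (2 * c + 1) 1 =
        {p | ∃ t < c, p = (2*c - 1 - t, t)} ∪ {p | ∃ t < c + 1, p = (2*c + t, 4*c + 1 - t)} ∧
      singularRoots (2 * c + 1) (4 * c + 1) =
        {p | ∃ t < c + 1, p = (t, 2*c + 1 - t)} ∪ {p | ∃ t < c, p = (4*c + 1 - t, 2*c + 2 + t)} := by
  refine ⟨?_, ?_, ?_⟩ <;> ext ⟨i, j⟩ <;>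
    simp only [singularRoots, Set.mem_ofPred_eq, Set.mem_union, Prod.mk.injEq] <;> constructor
  · intro h
    by_cases hj : j < c
    · exact .inr ⟨j, hj, by omega, rfl⟩
    · exact .inl ⟨4*c + 1 - j, by omega, by omega, by omega⟩
  · rintro (⟨t, ht, rfl, rfl⟩ | ⟨t, ht, rfl, rfl⟩) <;> omega
  · intro h
    by_cases hj : j < c
    · exact .inl ⟨j, hj, by omega, rfl⟩
    · exact .inr ⟨4*c + 1 - j, by omega, by omega, by omega⟩
  · rintro (⟨t, ht, rfl, rfl⟩ | ⟨t, ht, rfl, rfl⟩) <;> omega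
  · intro h
    by_cases hj : j ≤ 2*c + 1
    · exact .inl ⟨i, by omega, rfl, by omega⟩
    · exact .inr ⟨j - (2*c + 2), by omega, by omega, by omega⟩
  · rintro (⟨t, ht, rfl, rfl⟩ | ⟨t, ht, rfl, rfl⟩) <;> omega

theorem stmt_4_general (n m c : ℕ) (hnm : n + 1 = 2 * m)
    (ω : ℂ) (hω : ω = Complex.exp (2 * Real.pi * Complex.I / (n + 1)))
    (R : ℕ → Set (ℕ × ℕ))
    (hR : ∀ ℓ, R ℓ = {p | p.1 ≤ n ∧ p.2 ≤ n ∧ p.1 ≠ p.2 ∧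
      ∃ r : ℝ, 0 < r ∧ ω ^ p.2 - ω ^ p.1 =
        (r : ℂ) * Complex.exp (-(((ℓ : ℂ) + 1) * Real.pi * Complex.I) / (n + 1))}) :
    (m = 2 * c →
      (R 0 = {p | ∃ t < c, p = (2*c - 1 - t, t)} ∪ {p | ∃ t < c, p = (2*c + t, 4*c - 1 - t)} ∧
       R 1 = {p | ∃ t < c, p = (2*c - 1 + t, 4*c - 1 - t)} ∪ {p | ∃ t < c - 1, p = (2*c - 2 - t, t)} ∧
       R n = {p | ∃ t < c - 1, p = (4*c - 1 - t, 2*c + 1 + t)} ∪ {p | ∃ t < c, p = (t, 2*c - t)})) ∧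
    (m = 2 * c + 1 →
      (R 0 = {p | ∃ t < c, p = (2*c + 1 + t, 4*c + 1 - t)} ∪ {p | ∃ t < c, p = (2*c - t, t)} ∧
       R 1 = {p | ∃ t < c, p = (2*c - 1 - t, t)} ∪ {p | ∃ t < c + 1, p = (2*c + t, 4*c + 1 - t)} ∧
       R n = {p | ∃ t < c + 1, p = (t, 2*c + 1 - t)} ∪ {p | ∃ t < c, p = (4*c + 1 - t, 2*c + 2 + t)})) := by
  subst hω
  have hRm : ∀ ℓ ≤ n, R ℓ = singularRoots m ℓ := fun ℓ hℓ =>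
    (hR ℓ).trans (setOf_exists_pos_pow_sub_pow_eq_eq_singularRoots n m ℓ hnm hℓ)
  refine ⟨fun hc => ?_, fun hc => ?_⟩ <;> subst hc
  · obtain rfl : n = 4 * c - 1 := by omega
    rw [hRm 0 (by omega), hRm 1 (by omega), hRm _ le_rfl]
    exact singularRoots_two_mul c
  · obtain rfl : n = 4 * c + 1 := by omega
    rw [hRm 0 (by omega), hRm 1 (by omega), hRm _ le_rfl]
    exact singularRoots_two_mul_add_one c

/-- explicit description of the roots supported on the singular directions
`θ_ℓ = -(ℓ+1)π/(n+1)`, `ℓ ∈ {0, 1, n}`, in the case `n + 1 = 2m`. -/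
theorem stmt_4 (n m c : ℕ) (hm : 2 ≤ m) (hnm : n + 1 = 2 * m)
    (ω : ℂ) (hω : ω = Complex.exp (2 * Real.pi * Complex.I / (n + 1)))
    (R : ℕ → Set (ℕ × ℕ))
    (hR : ∀ ℓ, R ℓ = {p | p.1 ≤ n ∧ p.2 ≤ n ∧ p.1 ≠ p.2 ∧
      ∃ r : ℝ, 0 < r ∧ ω ^ p.2 - ω ^ p.1 =
        (r : ℂ) * Complex.exp (-(((ℓ : ℂ) + 1) * Real.pi * Complex.I) / (n + 1))}) :
    (m = 2 * c →
      (R 0 = {p | ∃ t < c, p = (2*c - 1 - t, t)} ∪ {p | ∃ t < c, p = (2*c + t, 4*c - 1 - t)} ∧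
       R 1 = {p | ∃ t < c, p = (2*c - 1 + t, 4*c - 1 - t)} ∪ {p | ∃ t < c - 1, p = (2*c - 2 - t, t)} ∧
       R n = {p | ∃ t < c - 1, p = (4*c - 1 - t, 2*c + 1 + t)} ∪ {p | ∃ t < c, p = (t, 2*c - t)})) ∧
    (m = 2 * c + 1 →
      (R 0 = {p | ∃ t < c, p = (2*c + 1 + t, 4*c + 1 - t)} ∪ {p | ∃ t < c, p = (2*c - t, t)} ∧
       R 1 = {p | ∃ t < c, p = (2*c - 1 - t, t)} ∪ {p | ∃ t < c + 1, p = (2*c + t, 4*c + 1 - t)} ∧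
       R n = {p | ∃ t < c + 1, p = (t, 2*c + 1 - t)} ∪ {p | ∃ t < c, p = (4*c + 1 - t, 2*c + 2 + t)})) :=
  stmt_4_general n m c hnm ω hω R hR
end

section
/- Let n ≥ 2, ω = exp(2πi/(n+1)), and fix any unit complex number u. Let R = {(i,j) : 0 ≤ i,j ≤ n, i ≠ j, ω^j − ω^i = r·u for some real r > 0} be the set of pairs supported on the direction u. Then any two distinct pairs in R are disjoint: if (i,j), (k,l) ∈ R and (i,j) ≠ (k,l), then {i,j} ∩ {k,l} = ∅. Consequently E_{i,j}·E_{k,l} = 0 = E_{k,l}·E_{i,j}, and the unipotent matrices I + s·E_{i,j} and I + t·E_{k,l} (s, t ∈ ℂ) commute; hence the product of unipotent Stokes-factor groups ∏_{(i,j)∈R} exp(ℂ·E_{i,j}) is independent of the ordering of the factors. -/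
/-!
A line meets a sphere of a real inner product space in at most two points, so a chord of the
unit circle is determined by either endpoint together with its direction. Hence two chords
`ω^i → ω^j` and `ω^k → ω^l` pointing in the same direction `u` that share an endpoint have the
same start and the same end; they cannot be glued end to start, since the combined chord
would meet the circle three times. As the powers `ω^0, …, ω^n` are distinct, distinct pairs
of `R` are disjoint, and disjoint pairs give elementary matrices with zero products.
-/

open Matrix
open scoped InnerProductSpace

section Chord

variable {E : Type*} [NormedAddCommGroup E] [InnerProductSpace ℝ E]

theorem mul_norm_sq_eq_of_norm_add_smul_eq {a u : E} {s : ℝ} (hs : s ≠ 0)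
    (h : ‖a + s • u‖ = ‖a‖) : s * ‖u‖ ^ 2 = -2 * ⟪a, u⟫_ℝ := by
  have hsq := congrArg (· ^ 2) h
  simp only [norm_add_sq_real, inner_smul_right, norm_smul, Real.norm_eq_abs, mul_pow,
    sq_abs] at hsq
  have : s * (s * ‖u‖ ^ 2 + 2 * ⟪a, u⟫_ℝ) = 0 := by linarith
  linarith [(mul_eq_zero.1 this).resolve_left hs]

theorem eq_of_norm_add_smul_eq {a u : E} (hu : u ≠ 0) {s t : ℝ} (hs : s ≠ 0) (ht : t ≠ 0)
    (h₁ : ‖a + s • u‖ = ‖a‖) (h₂ : ‖a + t • u‖ = ‖a‖) : s = t := by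
  have hu2 : ‖u‖ ^ 2 ≠ 0 := pow_ne_zero 2 (norm_ne_zero_iff.2 hu)
  exact mul_right_cancel₀ hu2 <| (mul_norm_sq_eq_of_norm_add_smul_eq hs h₁).trans
    (mul_norm_sq_eq_of_norm_add_smul_eq ht h₂).symm

theorem eq_and_eq_of_sphere_chords_meet {x y x' y' u : E} {ρ r r' : ℝ} (hu : u ≠ 0)
    (hx : ‖x‖ = ρ) (hy : ‖y‖ = ρ) (hx' : ‖x'‖ = ρ) (hy' : ‖y'‖ = ρ)
    (hr : 0 < r) (hr' : 0 < r') (h : y = x + r • u) (h' : y' = x' + r' • u)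
    (hmeet : x = x' ∨ x = y' ∨ y = x' ∨ y = y') : x = x' ∧ y = y' := by
  rcases hmeet with rfl | rfl | rfl | rfl
  · have : r = r' := eq_of_norm_add_smul_eq hu hr.ne' hr'.ne'
      (by rw [← h, hy, hx]) (by rw [← h', hy', hx])
    exact ⟨rfl, by rw [h, h', this]⟩
  · have : r' + r = r' := eq_of_norm_add_smul_eq hu (by positivity) hr'.ne'
      (by rw [add_smul, ← add_assoc, ← h', ← h, hy, hx']) (by rw [← h', hy', hx'])
    linarith
  · have : r + r' = r := eq_of_norm_add_smul_eq hu (by positivity) hr.ne'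
      (by rw [add_smul, ← add_assoc, ← h, ← h', hy', hx]) (by rw [← h, hy, hx])
    linarith
  · have hx₀ : x = y + (-r) • u := by rw [h]; module
    have hx₀' : x' = y + (-r') • u := by rw [h']; module
    have : -r = -r' := eq_of_norm_add_smul_eq hu (by linarith) (by linarith)
      (by rw [← hx₀, hx, hy]) (by rw [← hx₀', hx', hy])
    exact ⟨by rw [hx₀, hx₀', this], rfl⟩

end Chord

theorem IsPrimitiveRoot.eq_and_eq_of_chords_meet {n : ℕ} {ω u : ℂ}
    (hζ : IsPrimitiveRoot ω (n + 1)) (hu : u ≠ 0) {i j k l : Fin (n + 1)} {r r' : ℝ}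
    (hr : 0 < r) (hr' : 0 < r')
    (hij : ω ^ (j : ℕ) - ω ^ (i : ℕ) = r * u) (hkl : ω ^ (l : ℕ) - ω ^ (k : ℕ) = r' * u)
    (hmeet : i = k ∨ i = l ∨ j = k ∨ j = l) : i = k ∧ j = l := by
  have hnorm (a : Fin (n + 1)) : ‖ω ^ (a : ℕ)‖ = 1 := by
    rw [norm_pow, hζ.norm'_eq_one n.succ_ne_zero, one_pow]
  have hinj {a b : Fin (n + 1)} (h : ω ^ (a : ℕ) = ω ^ (b : ℕ)) : a = b :=
    Fin.ext (hζ.pow_inj a.is_lt b.is_lt h)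
  have hchord {a b : Fin (n + 1)} {c : ℝ} (h : ω ^ (b : ℕ) - ω ^ (a : ℕ) = c * u) :
      ω ^ (b : ℕ) = ω ^ (a : ℕ) + c • u := by
    rw [Complex.real_smul, ← h, add_sub_cancel]
  obtain ⟨hik, hjl⟩ := eq_and_eq_of_sphere_chords_meet hu
    (hnorm i) (hnorm j) (hnorm k) (hnorm l) hr hr' (hchord hij) (hchord hkl)
    (by rcases hmeet with rfl | rfl | rfl | rfl <;> simp)
  exact ⟨hinj hik, hinj hjl⟩

theorem Commute.one_add_one_add {A : Type*} [Semiring A] {a b : A} (h : Commute a b) :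
    Commute (1 + a) (1 + b) :=
  (Commute.one_left _).add_left ((Commute.one_right a).add_right h)

theorem stmt_8_general (n : ℕ)
    (ω u : ℂ) (hω : ω = Complex.exp (2 * Real.pi * Complex.I / (n + 1)))
    (hu : ‖u‖ = 1)
    (R : Set (Fin (n + 1) × Fin (n + 1)))
    (hR : R = {p | p.1 ≠ p.2 ∧ ∃ r : ℝ, 0 < r ∧
      ω ^ (p.2 : ℕ) - ω ^ (p.1 : ℕ) = (r : ℂ) * u}) :
    (∀ p q, p ∈ R → q ∈ R → p ≠ q →
      p.1 ≠ q.1 ∧ p.1 ≠ q.2 ∧ p.2 ≠ q.1 ∧ p.2 ≠ q.2) ∧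
    (∀ p q, p ∈ R → q ∈ R → p ≠ q →
      Matrix.single p.1 p.2 (1 : ℂ) * Matrix.single q.1 q.2 (1 : ℂ) = 0 ∧
      Matrix.single q.1 q.2 (1 : ℂ) * Matrix.single p.1 p.2 (1 : ℂ) = 0) ∧
    ∀ p q, p ∈ R → q ∈ R → ∀ s t : ℂ,
      (1 + s • Matrix.single p.1 p.2 (1 : ℂ)) *
        (1 + t • Matrix.single q.1 q.2 (1 : ℂ)) =
      (1 + t • Matrix.single q.1 q.2 (1 : ℂ)) *
        (1 + s • Matrix.single p.1 p.2 (1 : ℂ)) := by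
  have hζ : IsPrimitiveRoot ω (n + 1) := by
    simpa [hω] using Complex.isPrimitiveRoot_exp (n + 1) n.succ_ne_zero
  have disjoint : ∀ p q, p ∈ R → q ∈ R → p ≠ q →
      p.1 ≠ q.1 ∧ p.1 ≠ q.2 ∧ p.2 ≠ q.1 ∧ p.2 ≠ q.2 := by
    subst hR
    rintro ⟨i, j⟩ ⟨k, l⟩ ⟨-, r, hr, hij⟩ ⟨-, r', hr', hkl⟩ hne
    by_contra hmeet
    simp only [not_and_or, not_not] at hmeet
    obtain ⟨rfl, rfl⟩ := IsPrimitiveRoot.eq_and_eq_of_chords_meet hζ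
      (norm_ne_zero_iff.1 (hu ▸ one_ne_zero)) hr hr' hij hkl hmeet
    exact hne rfl
  have single_mul_single (p q) (hp : p ∈ R) (hq : q ∈ R) (hne : p ≠ q) :
      Matrix.single p.1 p.2 (1 : ℂ) * Matrix.single q.1 q.2 (1 : ℂ) = 0 ∧
      Matrix.single q.1 q.2 (1 : ℂ) * Matrix.single p.1 p.2 (1 : ℂ) = 0 :=
    have ⟨_, h12, h21, _⟩ := disjoint p q hp hq hne
    ⟨single_mul_single_of_ne _ _ _ _ h21 _, single_mul_single_of_ne _ _ _ _ h12.symm _⟩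
  refine ⟨disjoint, single_mul_single, fun p q hp hq s t => Commute.one_add_one_add ?_⟩
  obtain rfl | hne := eq_or_ne p q
  · exact ((Commute.refl _).smul_left s).smul_right t
  · obtain ⟨hpq, hqp⟩ := single_mul_single p q hp hq hne
    change _ * _ = _ * _
    rw [smul_mul_smul_comm, smul_mul_smul_comm, hpq, hqp, smul_zero, smul_zero]

/-- any two distinct roots supported on a common direction `u` are disjoint
pairs; consequently the corresponding elementary matrices multiply to zero and the
associated unipotent Stokes factors commute. -/
theorem stmt_8 (n : ℕ) (hn : 2 ≤ n)
    (ω u : ℂ) (hω : ω = Complex.exp (2 * Real.pi * Complex.I / (n + 1)))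
    (hu : ‖u‖ = 1)
    (R : Set (Fin (n + 1) × Fin (n + 1)))
    (hR : R = {p | p.1 ≠ p.2 ∧ ∃ r : ℝ, 0 < r ∧
      ω ^ (p.2 : ℕ) - ω ^ (p.1 : ℕ) = (r : ℂ) * u}) :
    (∀ p q, p ∈ R → q ∈ R → p ≠ q →
      p.1 ≠ q.1 ∧ p.1 ≠ q.2 ∧ p.2 ≠ q.1 ∧ p.2 ≠ q.2) ∧
    (∀ p q, p ∈ R → q ∈ R → p ≠ q →
      Matrix.single p.1 p.2 (1 : ℂ) * Matrix.single q.1 q.2 (1 : ℂ) = 0 ∧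
      Matrix.single q.1 q.2 (1 : ℂ) * Matrix.single p.1 p.2 (1 : ℂ) = 0) ∧
    ∀ p q, p ∈ R → q ∈ R → ∀ s t : ℂ,
      (1 + s • Matrix.single p.1 p.2 (1 : ℂ)) *
        (1 + t • Matrix.single q.1 q.2 (1 : ℂ)) =
      (1 + t • Matrix.single q.1 q.2 (1 : ℂ)) *
        (1 + s • Matrix.single p.1 p.2 (1 : ℂ)) :=
  stmt_8_general n ω u hω hu R hR
end

section
/- Let n ≥ 2 and ω = exp(2πi/(n+1)). For ℓ ∈ {0,1,n} let θ_ℓ = −(ℓ+1)π/(n+1) if n+1 is even, and θ_ℓ = −(2ℓ+1)π/(2(n+1)) if n+1 is odd, and let R_ℓ = {(i,j) : 0 ≤ i,j ≤ n, i ≠ j, ω^j − ω^i = r·e^{iθ_ℓ} for some real r > 0}. The transpositions (i j) for (i,j) ∈ R_0 are pairwise disjoint; let p be the permutation of {0,…,n} equal to their product. Then {(p(i), p(j)) : (i,j) ∈ R_n} = R_1. -/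
/-!
For unit complex numbers `a, b, e`, the chord `b - a` is a nonzero real multiple of `e` exactly
when `a ≠ b` and `a b = -e²`, the sign of the multiple telling `(a, b)` from `(b, a)`.
With `e_ℓ = exp (i θ_ℓ)` and `c = ⌊n / 2⌋` one has `ω^c = -e_0² = e_1 e_n`. The first identity makes
`R_0` the set of oriented pairs `{i, c - i}`, so `p` is the reflection `i ↦ c - i`; the second shows
that `z ↦ ω^c z̄` turns a chord in direction `e_n` into one in direction `ω^c ē_n = e_1`.
-/

open Complex ComplexConjugate Real

namespace Circle

theorem coe_inv_sub_coe_inv_of_sub_eq {a b e : Circle} {r : ℝ} (h : (b : ℂ) - a = r * e) :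
    ((b⁻¹ : Circle) : ℂ) - (a⁻¹ : Circle) = r * (e⁻¹ : Circle) := by
  rw [coe_inv_eq_conj, coe_inv_eq_conj, coe_inv_eq_conj, ← map_sub, h, map_mul, conj_ofReal]

theorem mul_eq_neg_sq_of_sub_eq {a b e : Circle} {r : ℝ} (hr : r ≠ 0)
    (h : (b : ℂ) - a = r * e) : a * b = -(e ^ 2) := by
  have hinv := coe_inv_sub_coe_inv_of_sub_eq h
  push_cast at hinv
  field_simp at hinv
  have hr0 : (r : ℂ) * ((a : ℂ) * b + e ^ 2) = 0 := by linear_combination -hinv - e * h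
  ext
  push_cast
  linear_combination (mul_eq_zero.mp hr0).resolve_left (ofReal_ne_zero.mpr hr)

theorem exists_sub_eq_or_exists_sub_eq_of_mul_eq_neg_sq {a b e : Circle} (hab : a ≠ b)
    (h : a * b = -(e ^ 2)) :
    (∃ r : ℝ, 0 < r ∧ (b : ℂ) - a = r * e) ∨ (∃ r : ℝ, 0 < r ∧ (a : ℂ) - b = r * e) := by
  have hprod : (a : ℂ) * b = -(e : ℂ) ^ 2 := by simpa using congrArg ((↑) : Circle → ℂ) h
  set z : ℂ := ((b : ℂ) - a) / e with hz
  have hreal : conj z = z := by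
    rw [hz, map_div₀, map_sub, ← coe_inv_eq_conj, ← coe_inv_eq_conj, ← coe_inv_eq_conj]
    push_cast
    field_simp
    linear_combination (a - b) * hprod
  have hzne : z.re ≠ 0 := by
    rw [Ne, ← Complex.ofReal_eq_zero, Complex.conj_eq_iff_re.mp hreal, hz]
    simpa [sub_eq_zero, coe_inj] using hab.symm
  have hba : (b : ℂ) - a = z.re * e := by
    rw [Complex.conj_eq_iff_re.mp hreal, hz, div_mul_cancel₀ _ (coe_ne_zero e)]
  rcases hzne.lt_or_gt with hneg | hpos
  · exact .inr ⟨-z.re, neg_pos.mpr hneg, by push_cast; linear_combination -hba⟩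
  · exact .inl ⟨z.re, hpos, hba⟩

theorem coe_mul_inv_sub_coe_mul_inv {a b e e' : Circle} {r : ℝ} (h : (b : ℂ) - a = r * e) :
    ((e * e' * b⁻¹ : Circle) : ℂ) - (e * e' * a⁻¹ : Circle) = r * e' := by
  have hinv := coe_inv_sub_coe_inv_of_sub_eq h
  push_cast at hinv ⊢
  linear_combination (e : ℂ) * e' * hinv + r * e' * mul_inv_cancel₀ (coe_ne_zero e)

theorem neg_exp_sq (x : ℝ) : -(Circle.exp x ^ 2) = Circle.exp (π + 2 * x) := by
  ext
  rw [coe_neg, coe_pow, coe_exp, coe_exp, ← Complex.exp_nat_mul]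
  push_cast
  rw [add_mul, Complex.exp_add, exp_pi_mul_I]
  ring_nf

end Circle

namespace ZMod

theorem toCircle_eq_exp_pow (N : ℕ) [NeZero N] (j : ZMod N) :
    (toCircle j : ℂ) = Complex.exp (2 * π * I / N) ^ j.val := by
  rw [toCircle_apply, ← Complex.exp_nat_mul]
  ring_nf

def chordsAlong (N : ℕ) [NeZero N] (e : Circle) : Set (ZMod N × ZMod N) :=
  {p | p.1 ≠ p.2 ∧ ∃ r : ℝ, 0 < r ∧ (toCircle p.2 : ℂ) - toCircle p.1 = r * e}

variable {N : ℕ} [NeZero N] {e e' : Circle} {c i j : ZMod N}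

theorem add_eq_of_mem_chordsAlong (hc : toCircle c = -(e ^ 2)) (h : (i, j) ∈ chordsAlong N e) :
    i + j = c := by
  obtain ⟨-, r, hr, hji⟩ := h
  apply injective_toCircle
  rw [AddChar.map_add_eq_mul, hc, Circle.mul_eq_neg_sq_of_sub_eq hr.ne' hji]

theorem mem_chordsAlong_or_swap_mem (hc : toCircle c = -(e ^ 2)) (hij : i ≠ j) (hs : i + j = c) :
    (i, j) ∈ chordsAlong N e ∨ (j, i) ∈ chordsAlong N e := by
  have hprod : toCircle i * toCircle j = -(e ^ 2) := by rw [← AddChar.map_add_eq_mul, hs, hc]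
  exact (Circle.exists_sub_eq_or_exists_sub_eq_of_mul_eq_neg_sq
    (injective_toCircle.ne hij) hprod).imp (⟨hij, ·⟩) (⟨hij.symm, ·⟩)

theorem swap_notMem_chordsAlong (h : (i, j) ∈ chordsAlong N e) : (j, i) ∉ chordsAlong N e := by
  rintro ⟨-, s, hs, hij⟩
  obtain ⟨-, r, hr, hji⟩ := h
  have : ((r + s : ℝ) : ℂ) * e = 0 := by push_cast; linear_combination -hij - hji
  simp only [mul_eq_zero, Circle.coe_ne_zero, or_false, Complex.ofReal_eq_zero] at this
  linarith

theorem ne_of_mem_chordsAlong (hc : toCircle c = -(e ^ 2)) {p q : ZMod N × ZMod N}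
    (hp : p ∈ chordsAlong N e) (hq : q ∈ chordsAlong N e) (hpq : p ≠ q) :
    p.1 ≠ q.1 ∧ p.1 ≠ q.2 ∧ p.2 ≠ q.1 ∧ p.2 ≠ q.2 := by
  obtain ⟨i, j⟩ := p
  obtain ⟨k, l⟩ := q
  have hij := add_eq_of_mem_chordsAlong hc hp
  have hkl := add_eq_of_mem_chordsAlong hc hq
  have hswap := swap_notMem_chordsAlong hp
  refine ⟨?_, ?_, ?_, ?_⟩ <;> rintro rfl
  · exact hpq (by rw [add_left_cancel (hij.trans hkl.symm)])
  · exact hswap (by rwa [show j = k by linear_combination hij - hkl])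
  · exact hswap (by rwa [show i = l by linear_combination hij - hkl])
  · exact hpq (by rw [add_right_cancel (hij.trans hkl.symm)])

theorem sub_mem_chordsAlong (hc : toCircle c = e * e') {u v : ZMod N}
    (h : (u, v) ∈ chordsAlong N e) : (c - u, c - v) ∈ chordsAlong N e' := by
  obtain ⟨huv, r, hr, hvu⟩ := h
  refine ⟨fun h ↦ huv (sub_right_injective h), r, hr, ?_⟩
  simp only [AddChar.map_sub_eq_div, div_eq_mul_inv, hc]
  exact Circle.coe_mul_inv_sub_coe_mul_inv hvu

theorem image_sub_chordsAlong (hc : toCircle c = e * e') :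
    {q : ZMod N × ZMod N | ∃ i j, (i, j) ∈ chordsAlong N e ∧ q = (c - i, c - j)}
      = chordsAlong N e' := by
  ext q
  refine ⟨?_, fun h ↦ ⟨c - q.1, c - q.2, sub_mem_chordsAlong (by rw [hc, mul_comm]) h, by simp⟩⟩
  rintro ⟨i, j, h, rfl⟩
  exact sub_mem_chordsAlong hc h

theorem eq_sub_of_swaps_chordsAlong (hc : toCircle c = -(e ^ 2)) {σ : ZMod N → ZMod N}
    (hswap : ∀ i j, (i, j) ∈ chordsAlong N e → σ i = j ∧ σ j = i)
    (hfix : ∀ x, (∀ i j, (i, j) ∈ chordsAlong N e → x ≠ i ∧ x ≠ j) → σ x = x) (x : ZMod N) :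
    σ x = c - x := by
  by_cases hx : c - x = x
  · rw [hx]
    refine hfix x fun i j h ↦ ⟨?_, ?_⟩ <;> rintro rfl <;> apply h.1
    · linear_combination -hx - add_eq_of_mem_chordsAlong hc h
    · linear_combination add_eq_of_mem_chordsAlong hc h + hx
  · rcases mem_chordsAlong_or_swap_mem hc (Ne.symm hx) (add_sub_cancel x c) with h | h
    · exact (hswap _ _ h).1
    · exact (hswap _ _ h).2

end ZMod

noncomputable def singularAngle (n ℓ : ℕ) : ℝ :=
  if Even (n + 1) then -(((ℓ : ℝ) + 1) * Real.pi) / (n + 1)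
  else -((2 * (ℓ : ℝ) + 1) * Real.pi) / (2 * (n + 1))

theorem singularAngle_one_add_singularAngle_self (n : ℕ) :
    singularAngle n 1 + singularAngle n n = 2 * singularAngle n 0 - π := by
  unfold singularAngle
  split_ifs <;> field_simp <;> ring

theorem pi_add_two_mul_singularAngle_zero (n : ℕ) :
    π + 2 * singularAngle n 0 = 2 * π * (n / 2 : ℕ) / (n + 1) := by
  rcases Nat.even_or_odd' n with ⟨k, rfl | rfl⟩
  · have hk : 2 * k / 2 = k := by omega
    simp only [singularAngle, hk, Nat.even_add_one, even_two_mul, not_true_eq_false, if_false]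
    push_cast
    field_simp
    ring
  · have hk : (2 * k + 1) / 2 = k := by omega
    rw [singularAngle, if_pos ⟨k + 1, by ring⟩, hk]
    push_cast
    field_simp
    ring

theorem toCircle_half_eq_neg_sq (n : ℕ) :
    ZMod.toCircle ((n / 2 : ℕ) : ZMod (n + 1)) = -(Circle.exp (singularAngle n 0) ^ 2) := by
  ext
  rw [Circle.neg_exp_sq, pi_add_two_mul_singularAngle_zero, ZMod.toCircle_natCast, Circle.coe_exp]
  push_cast
  ring_nf

theorem toCircle_half_eq_mul (n : ℕ) :
    ZMod.toCircle ((n / 2 : ℕ) : ZMod (n + 1)) =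
      Circle.exp (singularAngle n n) * Circle.exp (singularAngle n 1) := by
  rw [toCircle_half_eq_neg_sq, Circle.neg_exp_sq, ← Circle.exp_add, add_comm (singularAngle n n),
    singularAngle_one_add_singularAngle_self, ← Circle.exp_add_two_pi (2 * _ - π)]
  ring_nf

theorem stmt_9_general (n : ℕ)
    (ω : ℂ) (hω : ω = Complex.exp (2 * Real.pi * Complex.I / (n + 1)))
    (θ : ℕ → ℝ)
    (hθ : ∀ ℓ, θ ℓ = if Even (n + 1) then -(((ℓ : ℝ) + 1) * Real.pi) / (n + 1)
      else -((2 * (ℓ : ℝ) + 1) * Real.pi) / (2 * (n + 1)))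
    (R : ℕ → Set (ZMod (n + 1) × ZMod (n + 1)))
    (hR : ∀ ℓ, R ℓ = {p | p.1 ≠ p.2 ∧ ∃ r : ℝ, 0 < r ∧
      ω ^ (p.2).val - ω ^ (p.1).val = (r : ℂ) * Complex.exp ((θ ℓ : ℂ) * Complex.I)}) :
    (∀ p q, p ∈ R 0 → q ∈ R 0 → p ≠ q →
      p.1 ≠ q.1 ∧ p.1 ≠ q.2 ∧ p.2 ≠ q.1 ∧ p.2 ≠ q.2) ∧
    ∀ p : Equiv.Perm (ZMod (n + 1)),
      (∀ i j : ZMod (n + 1), (i, j) ∈ R 0 → p i = j ∧ p j = i) →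
      (∀ x : ZMod (n + 1), (∀ i j : ZMod (n + 1), (i, j) ∈ R 0 → x ≠ i ∧ x ≠ j) → p x = x) →
      {q : ZMod (n + 1) × ZMod (n + 1) | ∃ i j : ZMod (n + 1), (i, j) ∈ R n ∧ q = (p i, p j)}
        = R 1 := by
  obtain rfl : θ = singularAngle n := funext hθ
  obtain rfl : R = fun ℓ ↦ ZMod.chordsAlong (n + 1) (Circle.exp (singularAngle n ℓ)) := by
    funext ℓ
    simp only [hR ℓ, ZMod.chordsAlong, ZMod.toCircle_eq_exp_pow, hω, Circle.coe_exp]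
    push_cast
    rfl
  refine ⟨fun p q ↦ ZMod.ne_of_mem_chordsAlong (toCircle_half_eq_neg_sq n),
    fun p hswap hfix ↦ ?_⟩
  have hp : ⇑p = (((n / 2 : ℕ) : ZMod (n + 1)) - ·) :=
    funext (ZMod.eq_sub_of_swaps_chordsAlong (toCircle_half_eq_neg_sq n) hswap hfix)
  simp only [hp]
  exact ZMod.image_sub_chordsAlong (toCircle_half_eq_mul n)

/-- the transpositions coming from `R 0` are pairwise disjoint, and the
permutation `p` given by their product maps `R n` onto `R 1`. -/
theorem stmt_9 (n : ℕ) (hn : 2 ≤ n)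
    (ω : ℂ) (hω : ω = Complex.exp (2 * Real.pi * Complex.I / (n + 1)))
    (θ : ℕ → ℝ)
    (hθ : ∀ ℓ, θ ℓ = if Even (n + 1) then -(((ℓ : ℝ) + 1) * Real.pi) / (n + 1)
      else -((2 * (ℓ : ℝ) + 1) * Real.pi) / (2 * (n + 1)))
    (R : ℕ → Set (ZMod (n + 1) × ZMod (n + 1)))
    (hR : ∀ ℓ, R ℓ = {p | p.1 ≠ p.2 ∧ ∃ r : ℝ, 0 < r ∧
      ω ^ (p.2).val - ω ^ (p.1).val = (r : ℂ) * Complex.exp ((θ ℓ : ℂ) * Complex.I)}) :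
    (∀ p q, p ∈ R 0 → q ∈ R 0 → p ≠ q →
      p.1 ≠ q.1 ∧ p.1 ≠ q.2 ∧ p.2 ≠ q.1 ∧ p.2 ≠ q.2) ∧
    ∀ p : Equiv.Perm (ZMod (n + 1)),
      (∀ i j : ZMod (n + 1), (i, j) ∈ R 0 → p i = j ∧ p j = i) →
      (∀ x : ZMod (n + 1), (∀ i j : ZMod (n + 1), (i, j) ∈ R 0 → x ≠ i ∧ x ≠ j) → p x = x) →
      {q : ZMod (n + 1) × ZMod (n + 1) | ∃ i j : ZMod (n + 1), (i, j) ∈ R n ∧ q = (p i, p j)}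
        = R 1 :=
  stmt_9_general n ω hω θ hθ R hR
end

section
/- Let n ≥ 2 and ω = exp(2πi/(n+1)). For ℓ ∈ {0,n} let θ_ℓ = −(ℓ+1)π/(n+1) if n+1 is even, and θ_ℓ = −(2ℓ+1)π/(2(n+1)) if n+1 is odd, and let R_ℓ = {(i,j) : 0 ≤ i,j ≤ n, i ≠ j, ω^j − ω^i = r·e^{iθ_ℓ} for some real r > 0}. Let p be the product of the pairwise disjoint transpositions (i j) over (i,j) ∈ R_0, and q the product of the pairwise disjoint transpositions (i j) over (i,j) ∈ R_n. Then the composition q ∘ p is the cyclic permutation of {0,…,n} sending i to i+1 mod n+1. -/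
/-!
Write `m = n + 1`. The chord `ω ^ j - ω ^ i` is `2 sin (π (j - i) / m)` times
`exp ((π (i + j) / m + π / 2) I)`, and `θ ℓ = π / 2 - π (⌊m / 2⌋ + ℓ + 1) / m` in both parity
cases. So the chord is a nonzero real multiple of `exp (θ ℓ I)` iff `i ≠ j` and
`sin (π (i + j + ⌊m / 2⌋ + ℓ + 1) / m) = 0`, i.e. `i + j = c ℓ := -(⌊m / 2⌋ + ℓ + 1)` in `ℤ/m`;
the sign of the multiple decides which of `(i, j)`, `(j, i)` lies in `R ℓ`. Hence `p` and `q` are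
the reflections `x ↦ c 0 - x` and `x ↦ c n - x`, and `q ∘ p` is translation by `c n - c 0 = -n = 1`.
-/

open Complex (I exp)
open scoped Real

theorem Complex.exp_mul_I_sub_exp_mul_I (x y : ℝ) :
    exp (y * I) - exp (x * I) =
      (2 * Real.sin ((y - x) / 2) : ℝ) * exp (((x + y) / 2 + π / 2 : ℝ) * I) := by
  have hy : (y : ℂ) * I = ((y - x) / 2 : ℂ) * I + ((x + y) / 2 : ℂ) * I := by ring
  have hx : (x : ℂ) * I = -((y - x) / 2 : ℂ) * I + ((x + y) / 2 : ℂ) * I := by ring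
  push_cast
  rw [hy, hx, add_mul, Complex.exp_add _ (π / 2 * I), Complex.exp_pi_div_two_mul_I,
    Complex.exp_add, Complex.exp_add, Complex.sin]
  ring_nf
  rw [Complex.I_sq]
  ring

theorem Real.sin_pi_mul_div_eq_zero_iff (m : ℕ) [NeZero m] (N : ℤ) :
    Real.sin (π * N / m) = 0 ↔ (N : ZMod m) = 0 := by
  have hm : (m : ℝ) ≠ 0 := NeZero.ne _
  rw [Real.sin_eq_zero_iff, ZMod.intCast_zmod_eq_zero_iff_dvd]
  refine exists_congr fun k => ?_
  rw [eq_div_iff hm, mul_comm _ π, mul_assoc, mul_right_inj' Real.pi_ne_zero, eq_comm, mul_comm]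
  exact_mod_cast Iff.rfl

theorem Complex.exists_pos_mul_or_exists_pos_mul_neg_iff (z w : ℂ) :
    ((∃ r : ℝ, 0 < r ∧ z = r * w) ∨ ∃ r : ℝ, 0 < r ∧ -z = r * w) ↔
      ∃ r : ℝ, r ≠ 0 ∧ z = r * w := by
  constructor
  · rintro (⟨r, hr, h⟩ | ⟨r, hr, h⟩)
    · exact ⟨r, hr.ne', h⟩
    · exact ⟨-r, by linarith, by push_cast; linear_combination -h⟩
  · rintro ⟨r, hr, h⟩
    rcases hr.lt_or_gt with hr | hr
    · exact Or.inr ⟨-r, by linarith, by push_cast; linear_combination -h⟩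
    · exact Or.inl ⟨r, hr, h⟩

theorem Complex.not_exists_pos_mul_and_exists_pos_mul_neg {w : ℂ} (hw : w ≠ 0) (z : ℂ) :
    ¬((∃ r : ℝ, 0 < r ∧ z = r * w) ∧ ∃ r : ℝ, 0 < r ∧ -z = r * w) := by
  rintro ⟨⟨r, hr, h⟩, ⟨r', hr', h'⟩⟩
  have : ((r + r' : ℝ) : ℂ) * w = 0 := by push_cast; linear_combination -h - h'
  have : r + r' = 0 := by exact_mod_cast (mul_eq_zero.mp this).resolve_right hw
  linarith

theorem Complex.exists_ne_zero_mul_exp_iff {s : ℝ} (hs : s ≠ 0) (ψ θ : ℝ) :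
    (∃ r : ℝ, r ≠ 0 ∧ (s : ℂ) * exp (ψ * I) = r * exp (θ * I)) ↔
      Real.sin (ψ - θ) = 0 := by
  have key : ∀ r : ℝ, (s : ℂ) * exp (ψ * I) = r * exp (θ * I) ↔
      exp ((ψ - θ : ℝ) * I) = (r / s : ℝ) := by
    intro r
    push_cast
    rw [sub_mul, Complex.exp_sub, div_eq_div_iff (Complex.exp_ne_zero _) (by exact_mod_cast hs)]
    constructor <;> intro h <;> linear_combination h
  simp only [key]
  constructor
  · rintro ⟨r, -, h⟩
    simpa only [Complex.exp_ofReal_mul_I_im, Complex.ofReal_im] using congrArg Complex.im h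
  · intro h
    have hcos : Real.cos (ψ - θ) ≠ 0 := by
      intro hc
      simpa [h, hc] using Real.sin_sq_add_cos_sq (ψ - θ)
    refine ⟨s * Real.cos (ψ - θ), mul_ne_zero hs hcos, ?_⟩
    rw [Complex.exp_mul_I, ← Complex.ofReal_cos, ← Complex.ofReal_sin, h,
      mul_div_cancel_left₀ _ hs]
    simp

/-- `S` contains exactly one orientation of each 2-cycle `{x, c - x}` of the reflection
`x ↦ c - x`. -/
structure OrientsReflection {G : Type*} [AddCommGroup G] (S : Set (G × G)) (c : G) : Prop where
  mem_or_swap_mem_iff : ∀ i j, (i, j) ∈ S ∨ (j, i) ∈ S ↔ i ≠ j ∧ i + j = c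
  swap_not_mem : ∀ ⦃i j⦄, (i, j) ∈ S → (j, i) ∉ S

namespace OrientsReflection

variable {G : Type*} [AddCommGroup G] {S : Set (G × G)} {c : G}

theorem add_eq (hS : OrientsReflection S c) {i j : G} (h : (i, j) ∈ S) : i + j = c :=
  ((hS.mem_or_swap_mem_iff i j).1 (Or.inl h)).2

theorem ne (hS : OrientsReflection S c) {i j : G} (h : (i, j) ∈ S) : i ≠ j :=
  ((hS.mem_or_swap_mem_iff i j).1 (Or.inl h)).1

theorem entries_ne (hS : OrientsReflection S c) {p q : G × G} (hp : p ∈ S) (hq : q ∈ S)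
    (hpq : p ≠ q) : p.1 ≠ q.1 ∧ p.1 ≠ q.2 ∧ p.2 ≠ q.1 ∧ p.2 ≠ q.2 := by
  have hsum : p.1 + p.2 = q.1 + q.2 := (hS.add_eq hp).trans (hS.add_eq hq).symm
  have hswap (h₁ : p.1 = q.2) (h₂ : p.2 = q.1) : False := by
    obtain ⟨q₁, q₂⟩ := q
    subst h₁ h₂
    exact hS.swap_not_mem hp hq
  refine ⟨fun h => hpq (Prod.ext h ?_), fun h => hswap h ?_, fun h => hswap ?_ h,
    fun h => hpq (Prod.ext ?_ h)⟩
  · rw [h] at hsum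
    exact add_left_cancel hsum
  · rw [h, add_comm q.1] at hsum
    exact add_left_cancel hsum
  · rw [h, add_comm p.1] at hsum
    exact add_left_cancel hsum
  · rw [h] at hsum
    exact add_right_cancel hsum

theorem apply_eq_sub (hS : OrientsReflection S c) {f : G → G}
    (hswap : ∀ i j, (i, j) ∈ S → f i = j ∧ f j = i)
    (hfix : ∀ x, (∀ i j, (i, j) ∈ S → x ≠ i ∧ x ≠ j) → f x = x) (x : G) : f x = c - x := by
  by_cases hx : x = c - x
  · rw [← hx]
    refine hfix x fun i j hij => ⟨?_, ?_⟩ <;> rintro rfl <;> apply hS.ne hij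
    · exact hx.trans (eq_sub_of_add_eq' (hS.add_eq hij)).symm
    · exact (eq_sub_of_add_eq (hS.add_eq hij)).trans hx.symm
  · rcases (hS.mem_or_swap_mem_iff x (c - x)).2 ⟨hx, add_sub_cancel x c⟩ with h | h
    · exact (hswap _ _ h).1
    · exact (hswap _ _ h).2

end OrientsReflection

def pairSum (n ℓ : ℕ) : ZMod (n + 1) := -(((n + 1) / 2 + ℓ + 1 : ℕ) : ZMod (n + 1))

section RootChords

variable {n : ℕ} {ω : ℂ} {θ : ℕ → ℝ} {R : ℕ → Set (ZMod (n + 1) × ZMod (n + 1))}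

theorem theta_eq_pi_div_two_sub
    (hθ : ∀ ℓ, θ ℓ = if Even (n + 1) then -(((ℓ : ℝ) + 1) * Real.pi) / (n + 1)
      else -((2 * (ℓ : ℝ) + 1) * Real.pi) / (2 * (n + 1))) (ℓ : ℕ) :
    θ ℓ = π / 2 - π * (((n + 1) / 2 + ℓ + 1 : ℕ) : ℝ) / ((n + 1 : ℕ) : ℝ) := by
  rw [hθ]
  rcases Nat.even_or_odd' (n + 1) with ⟨t, ht | ht⟩
  · have ht0 : (t : ℝ) ≠ 0 := by norm_cast; omega
    have : (n : ℝ) + 1 = 2 * t := by exact_mod_cast ht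
    rw [if_pos ⟨t, by omega⟩, ht, Nat.mul_div_cancel_left t two_pos]
    push_cast
    rw [this]
    field_simp
    ring
  · have : (n : ℝ) + 1 = 2 * t + 1 := by exact_mod_cast ht
    rw [if_neg (Nat.not_even_iff_odd.mpr ⟨t, ht⟩), ht, show (2 * t + 1) / 2 = t by omega]
    push_cast
    rw [this]
    field_simp
    ring

theorem pow_sub_pow_eq_sin_mul_exp (hω : ω = Complex.exp (2 * Real.pi * Complex.I / (n + 1)))
    (a b : ℕ) :
    ω ^ b - ω ^ a = (2 * Real.sin (π * ((b - a : ℤ) : ℝ) / ((n + 1 : ℕ) : ℝ)) : ℝ) *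
      exp ((π * ((a + b : ℕ) : ℝ) / ((n + 1 : ℕ) : ℝ) + π / 2 : ℝ) * I) := by
  have hpow : ∀ k : ℕ, ω ^ k = exp ((2 * π * k / ((n + 1 : ℕ) : ℝ) : ℝ) * I) := by
    intro k
    rw [hω, ← Complex.exp_nat_mul]
    congr 1
    push_cast
    ring
  rw [hpow, hpow, Complex.exp_mul_I_sub_exp_mul_I]
  have hm : ((n + 1 : ℕ) : ℝ) ≠ 0 := by positivity
  congr 4 <;> push_cast <;> field_simp

theorem mem_or_swap_mem_iff (hω : ω = Complex.exp (2 * Real.pi * Complex.I / (n + 1)))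
    (hθ : ∀ ℓ, θ ℓ = if Even (n + 1) then -(((ℓ : ℝ) + 1) * Real.pi) / (n + 1)
      else -((2 * (ℓ : ℝ) + 1) * Real.pi) / (2 * (n + 1)))
    (hR : ∀ ℓ, R ℓ = {p | p.1 ≠ p.2 ∧ ∃ r : ℝ, 0 < r ∧
      ω ^ (p.2).val - ω ^ (p.1).val = (r : ℂ) * Complex.exp ((θ ℓ : ℂ) * Complex.I)})
    (ℓ : ℕ) (i j : ZMod (n + 1)) :
    (i, j) ∈ R ℓ ∨ (j, i) ∈ R ℓ ↔ i ≠ j ∧ i + j = pairSum n ℓ := by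
  simp only [hR, Set.mem_ofPred_eq, ne_comm (a := j), ← neg_sub (ω ^ j.val), ← and_or_left]
  refine and_congr_right fun hij => ?_
  have hs : 2 * Real.sin (π * ((j.val - i.val : ℤ) : ℝ) / ((n + 1 : ℕ) : ℝ)) ≠ 0 := by
    refine mul_ne_zero two_ne_zero ?_
    rw [Ne, Real.sin_pi_mul_div_eq_zero_iff]
    push_cast
    simpa [sub_eq_zero] using hij.symm
  rw [Complex.exists_pos_mul_or_exists_pos_mul_neg_iff, pow_sub_pow_eq_sin_mul_exp hω,
    Complex.exists_ne_zero_mul_exp_iff hs, theta_eq_pi_div_two_sub hθ, pairSum,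
    eq_neg_iff_add_eq_zero]
  generalize (n + 1) / 2 + ℓ + 1 = c
  have harg : π * ((i.val + j.val : ℕ) : ℝ) / ((n + 1 : ℕ) : ℝ) + π / 2 -
      (π / 2 - π * (c : ℝ) / ((n + 1 : ℕ) : ℝ)) =
      π * ((i.val + j.val + c : ℕ) : ℤ) / ((n + 1 : ℕ) : ℝ) := by
    push_cast
    ring
  rw [harg, Real.sin_pi_mul_div_eq_zero_iff]
  push_cast
  simp only [ZMod.natCast_val, ZMod.cast_id', id]

theorem swap_not_mem
    (hR : ∀ ℓ, R ℓ = {p | p.1 ≠ p.2 ∧ ∃ r : ℝ, 0 < r ∧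
      ω ^ (p.2).val - ω ^ (p.1).val = (r : ℂ) * Complex.exp ((θ ℓ : ℂ) * Complex.I)})
    (ℓ : ℕ) ⦃i j : ZMod (n + 1)⦄ (h : (i, j) ∈ R ℓ) : (j, i) ∉ R ℓ := by
  intro h'
  simp only [hR, Set.mem_ofPred_eq] at h h'
  rw [← neg_sub] at h'
  exact Complex.not_exists_pos_mul_and_exists_pos_mul_neg (Complex.exp_ne_zero _) _ ⟨h.2, h'.2⟩

end RootChords

theorem stmt_10_general (n : ℕ)
    (ω : ℂ) (hω : ω = Complex.exp (2 * Real.pi * Complex.I / (n + 1)))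
    (θ : ℕ → ℝ)
    (hθ : ∀ ℓ, θ ℓ = if Even (n + 1) then -(((ℓ : ℝ) + 1) * Real.pi) / (n + 1)
      else -((2 * (ℓ : ℝ) + 1) * Real.pi) / (2 * (n + 1)))
    (R : ℕ → Set (ZMod (n + 1) × ZMod (n + 1)))
    (hR : ∀ ℓ, R ℓ = {p | p.1 ≠ p.2 ∧ ∃ r : ℝ, 0 < r ∧
      ω ^ (p.2).val - ω ^ (p.1).val = (r : ℂ) * Complex.exp ((θ ℓ : ℂ) * Complex.I)}) :
    (∀ p q, p ∈ R 0 → q ∈ R 0 → p ≠ q →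
      p.1 ≠ q.1 ∧ p.1 ≠ q.2 ∧ p.2 ≠ q.1 ∧ p.2 ≠ q.2) ∧
    (∀ p q, p ∈ R n → q ∈ R n → p ≠ q →
      p.1 ≠ q.1 ∧ p.1 ≠ q.2 ∧ p.2 ≠ q.1 ∧ p.2 ≠ q.2) ∧
    ∀ p q : Equiv.Perm (ZMod (n + 1)),
      (∀ i j : ZMod (n + 1), (i, j) ∈ R 0 → p i = j ∧ p j = i) →
      (∀ x : ZMod (n + 1), (∀ i j : ZMod (n + 1), (i, j) ∈ R 0 → x ≠ i ∧ x ≠ j) → p x = x) →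
      (∀ i j : ZMod (n + 1), (i, j) ∈ R n → q i = j ∧ q j = i) →
      (∀ x : ZMod (n + 1), (∀ i j : ZMod (n + 1), (i, j) ∈ R n → x ≠ i ∧ x ≠ j) → q x = x) →
      ∀ x : ZMod (n + 1), q (p x) = x + 1 := by
  have hO (ℓ : ℕ) : OrientsReflection (R ℓ) (pairSum n ℓ) :=
    ⟨mem_or_swap_mem_iff hω hθ hR ℓ, swap_not_mem hR ℓ⟩
  refine ⟨fun _ _ => (hO 0).entries_ne, fun _ _ => (hO n).entries_ne,
    fun p q hp hpfix hq hqfix x => ?_⟩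
  have hn1 : (n : ZMod (n + 1)) + 1 = 0 := by exact_mod_cast ZMod.natCast_self (n + 1)
  rw [(hO n).apply_eq_sub hq hqfix, (hO 0).apply_eq_sub hp hpfix, pairSum, pairSum]
  push_cast
  linear_combination -hn1

/-- the product `q ∘ p` of the permutations given by the disjoint
transpositions of `R n` and `R 0` is the cyclic permutation `i ↦ i + 1` of `ℤ/(n+1)`. -/
theorem stmt_10 (n : ℕ) (hn : 2 ≤ n)
    (ω : ℂ) (hω : ω = Complex.exp (2 * Real.pi * Complex.I / (n + 1)))
    (θ : ℕ → ℝ)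
    (hθ : ∀ ℓ, θ ℓ = if Even (n + 1) then -(((ℓ : ℝ) + 1) * Real.pi) / (n + 1)
      else -((2 * (ℓ : ℝ) + 1) * Real.pi) / (2 * (n + 1)))
    (R : ℕ → Set (ZMod (n + 1) × ZMod (n + 1)))
    (hR : ∀ ℓ, R ℓ = {p | p.1 ≠ p.2 ∧ ∃ r : ℝ, 0 < r ∧
      ω ^ (p.2).val - ω ^ (p.1).val = (r : ℂ) * Complex.exp ((θ ℓ : ℂ) * Complex.I)}) :
    (∀ p q, p ∈ R 0 → q ∈ R 0 → p ≠ q →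
      p.1 ≠ q.1 ∧ p.1 ≠ q.2 ∧ p.2 ≠ q.1 ∧ p.2 ≠ q.2) ∧
    (∀ p q, p ∈ R n → q ∈ R n → p ≠ q →
      p.1 ≠ q.1 ∧ p.1 ≠ q.2 ∧ p.2 ≠ q.1 ∧ p.2 ≠ q.2) ∧
    ∀ p q : Equiv.Perm (ZMod (n + 1)),
      (∀ i j : ZMod (n + 1), (i, j) ∈ R 0 → p i = j ∧ p j = i) →
      (∀ x : ZMod (n + 1), (∀ i j : ZMod (n + 1), (i, j) ∈ R 0 → x ≠ i ∧ x ≠ j) → p x = x) →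
      (∀ i j : ZMod (n + 1), (i, j) ∈ R n → q i = j ∧ q j = i) →
      (∀ x : ZMod (n + 1), (∀ i j : ZMod (n + 1), (i, j) ∈ R n → x ≠ i ∧ x ≠ j) → q x = x) →
      ∀ x : ZMod (n + 1), q (p x) = x + 1 :=
  stmt_10_general n ω hω θ hθ R hR
end

section
/- Let X be an n×n Hermitian complex matrix and U an n×n unitary matrix. If exp(X)·U·exp(−X) is unitary, then U·X = X·U; consequently exp(X)·U·exp(−X) = U. -/
/-!
Put `E = exp X`, which is self-adjoint with inverse `exp (-X)`. Unitarity of `E U E⁻¹` reads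
`E⁻¹ U* E E U E⁻¹ = 1`, i.e. `U* E² U = E²`, so `U` commutes with `E² = exp (2X)`.
Since `2X = log (exp (2X))` is a continuous function of `exp (2X)`, it commutes with `U` too.
-/

open Matrix

theorem commute_mul_self_of_star_conj_mul_conj_eq_one {R : Type*} [Monoid R] [StarMul R]
    {e f u : R} (he : IsSelfAdjoint e) (hfe : f * e = 1) (hu : u * star u = 1)
    (h : star (e * u * f) * (e * u * f) = 1) : Commute (e * e) u := by
  have hef : e * star f = 1 := by simpa [he.star_eq] using congrArg star hfe
  have hconj : star u * (e * e) * u = e * e := calc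
    star u * (e * e) * u = e * star f * (star u * e * (e * u) * (f * e)) := by
      rw [hef, hfe]; simp only [one_mul, mul_one, mul_assoc]
    _ = e * (star (e * u * f) * (e * u * f)) * e := by
      simp only [star_mul, he.star_eq, mul_assoc]
    _ = e * e := by rw [h, mul_one]
  calc e * e * u = u * (star u * (e * e) * u) := by simp only [← mul_assoc, hu, one_mul]
    _ = u * (e * e) := by rw [hconj]

theorem IsSelfAdjoint.commute_of_commute_exp {A : Type*} [NormedRing A] [StarRing A]
    [NormedAlgebra ℝ A] [ContinuousFunctionalCalculus ℝ A IsSelfAdjoint] {a b : A}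
    (ha : IsSelfAdjoint a) (h : Commute (NormedSpace.exp a) b) : Commute a b :=
  CFC.log_exp a ha ▸ h.cfc_real Real.log

/-- if `X` is Hermitian, `U` is unitary and `exp(X) U exp(-X)` is unitary,
then `U` commutes with `X` and hence `exp(X) U exp(-X) = U`. -/
theorem stmt_13 (n : ℕ) (X U : Matrix (Fin n) (Fin n) ℂ)
    (hX : X.IsHermitian) (hU : Uᴴ * U = 1)
    (h : (NormedSpace.exp X * U * NormedSpace.exp (-X))ᴴ *
      (NormedSpace.exp X * U * NormedSpace.exp (-X)) = 1) :
    U * X = X * U ∧ NormedSpace.exp X * U * NormedSpace.exp (-X) = U := by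
  have hinv : NormedSpace.exp (-X) * NormedSpace.exp X = 1 := by
    rw [← exp_add_of_commute _ _ (.neg_left (.refl X)), neg_add_cancel, NormedSpace.exp_zero]
  have hexp : Commute (NormedSpace.exp (X + X)) U := by
    rw [exp_add_of_commute _ _ (.refl X)]
    exact commute_mul_self_of_star_conj_mul_conj_eq_one hX.exp hinv (mul_eq_one_comm.mp hU) h
  have hXX : Commute (X + X) U := by
    open scoped Matrix.Norms.L2Operator in
    exact IsSelfAdjoint.commute_of_commute_exp (hX.add hX) hexp
  have hXU : Commute X U := by
    have hhalf : X = (2⁻¹ : ℂ) • (X + X) := by rw [← two_smul ℂ X, smul_smul]; norm_num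
    exact hhalf ▸ hXX.smul_left _
  refine ⟨hXU.eq.symm, ?_⟩
  rw [hXU.exp_left.eq, mul_assoc, ← exp_add_of_commute _ _ (.neg_right (.refl X)),
    add_neg_cancel, NormedSpace.exp_zero, mul_one]
end

section
/- Let n+1 = 2m with m ≥ 2. Let 𝔄 = { (ϱ_0,…,ϱ_n) ∈ ℝ^{n+1} : ϱ_m ≤ ϱ_{m+1} ≤ … ≤ ϱ_{2m−1} ≤ ϱ_0 ≤ ϱ_1 ≤ … ≤ ϱ_{m−1} ≤ 2 + ϱ_m and ϱ_0 + ϱ_1 + … + ϱ_n = 0 } (a Weyl alcove of SU(n+1)), and let 𝔄^p = { ϱ ∈ 𝔄 : ϱ_i + ϱ_{n−i} = 0 for all i }. Then { (γ_0,…,γ_n) ∈ ℝ^{n+1} : γ_{i+1} − γ_i ≥ −2 for all i ∈ ℤ/(n+1) (indices mod n+1), and γ_i + γ_{n−i} = 0 for all i } = (n+1)·𝔄^p − (1, 3, …, 2m−1, 1−2m, …, −3, −1), i.e. the γ-region is the image of 𝔄^p under scaling by n+1 followed by translation by minus the vector whose j-th component is 2j+1 for 0 ≤ j ≤ m−1 and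 −(2(n−j)+1) for m ≤ j ≤ n. -/
/-
Write `c = todaShift n m` for the vector `(1, 3, …, 2m-1, 1-2m, …, -3, -1)`. It is antisymmetric
under `i ↦ n - i`, and its cyclic differences `c (i+1) - c i` all equal `2`, except at `i = m - 1`
where the jump is `2 - 2(n+1)`. Hence for `γ = (n+1) ϱ - c` one has
`γ (i+1) - γ i + 2 = (n+1) (ϱ (i+1) - ϱ i + 2 [i = m - 1])`, so the conditions
`γ (i+1) - γ i ≥ -2` are exactly the cyclic chain of inequalities defining the alcove, and
antisymmetry of `γ` is antisymmetry of `ϱ`. The condition `∑ ϱ i = 0` comes for free from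
antisymmetry.
-/

noncomputable def todaShift (n m : ℕ) (j : ZMod (n + 1)) : ℝ :=
  if j.val < m then 2 * (j.val : ℝ) + 1 else -(2 * ((n - j.val : ℕ) : ℝ) + 1)

def alcove (n m : ℕ) : Set (ZMod (n + 1) → ℝ) :=
  {ϱ |
      (∀ j : ℕ, m ≤ j → j + 1 ≤ 2 * m - 1 →
        ϱ ((j : ℕ) : ZMod (n + 1)) ≤ ϱ ((j + 1 : ℕ) : ZMod (n + 1))) ∧
      ϱ ((2 * m - 1 : ℕ) : ZMod (n + 1)) ≤ ϱ 0 ∧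
      (∀ j : ℕ, j + 1 ≤ m - 1 →
        ϱ ((j : ℕ) : ZMod (n + 1)) ≤ ϱ ((j + 1 : ℕ) : ZMod (n + 1))) ∧
      ϱ ((m - 1 : ℕ) : ZMod (n + 1)) ≤ 2 + ϱ ((m : ℕ) : ZMod (n + 1)) ∧
      ∑ i, ϱ i = 0}

theorem Fintype.sum_eq_zero_of_add_apply_sub_eq_zero {G : Type*} [AddGroup G] [Fintype G]
    {f : G → ℝ} (a : G) (h : ∀ i, f i + f (a - i) = 0) : ∑ i, f i = 0 := by
  have hreflect : ∑ i, f (a - i) = ∑ i, f i :=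
    Fintype.sum_equiv (Equiv.subLeft a) _ _ fun _ => rfl
  have hpairs : ∑ i, (f i + f (a - i)) = 0 := by simp only [h, Finset.sum_const_zero]
  rw [Finset.sum_add_distrib, hreflect] at hpairs
  linarith

section TodaShift

variable {n m : ℕ}

theorem ZMod.exists_natCast_eq (i : ZMod (n + 1)) : ∃ v ≤ n, (v : ZMod (n + 1)) = i :=
  ⟨i.val, Nat.lt_succ_iff.mp i.val_lt, ZMod.natCast_zmod_val i⟩

theorem todaShift_natCast {v : ℕ} (hv : v ≤ n) :
    todaShift n m v = if v < m then 2 * (v : ℝ) + 1 else -(2 * ((n : ℝ) - v) + 1) := by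
  rw [todaShift, ZMod.val_natCast_of_lt (Nat.lt_succ_of_le hv), Nat.cast_sub hv]

theorem todaShift_add_todaShift_sub (hnm : n + 1 = 2 * m) (i : ZMod (n + 1)) :
    todaShift n m i + todaShift n m ((n : ZMod (n + 1)) - i) = 0 := by
  obtain ⟨v, hv, rfl⟩ := ZMod.exists_natCast_eq i
  rw [← Nat.cast_sub hv, todaShift_natCast hv, todaShift_natCast (Nat.sub_le n v),
    Nat.cast_sub hv]
  split_ifs <;> first | omega | ring

theorem todaShift_add_one_sub (hnm : n + 1 = 2 * m) (i : ZMod (n + 1)) :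
    todaShift n m (i + 1) - todaShift n m i =
      2 - if i.val + 1 = m then 2 * ((n : ℝ) + 1) else 0 := by
  obtain ⟨v, hv, rfl⟩ := ZMod.exists_natCast_eq i
  have hnm' : (n : ℝ) + 1 = 2 * m := by exact_mod_cast hnm
  rw [ZMod.val_natCast_of_lt (Nat.lt_succ_of_le hv), ← Nat.cast_succ]
  rcases hv.lt_or_eq with hv | rfl
  · rw [todaShift_natCast hv, todaShift_natCast hv.le]
    split_ifs <;> first | omega | (push_cast; linarith)
  · rw [ZMod.natCast_self, ← Nat.cast_zero, todaShift_natCast (Nat.zero_le _),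
      todaShift_natCast le_rfl]
    split_ifs <;> first | omega | (push_cast; linarith)

theorem mem_alcove_iff (hnm : n + 1 = 2 * m) (ϱ : ZMod (n + 1) → ℝ) :
    ϱ ∈ alcove n m ↔
      (∀ i : ZMod (n + 1), ϱ i ≤ ϱ (i + 1) + if i.val + 1 = m then 2 else 0) ∧ ∑ i, ϱ i = 0 := by
  have hm : 1 ≤ m := by omega
  have hval {v : ℕ} (hv : v ≤ n) : (v : ZMod (n + 1)).val = v :=
    ZMod.val_natCast_of_lt (Nat.lt_succ_of_le hv)
  simp only [alcove, Set.mem_ofPred_eq]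
  constructor
  · rintro ⟨hupper, hwrap, hlower, hjump, hsum⟩
    refine ⟨fun i => ?_, hsum⟩
    obtain ⟨v, hv, rfl⟩ := ZMod.exists_natCast_eq i
    rw [hval hv, ← Nat.cast_add_one]
    split_ifs with hvm
    · obtain rfl : v = m - 1 := by omega
      rw [Nat.sub_add_cancel hm]
      linarith
    · rw [add_zero]
      rcases lt_or_ge (v + 1) m with hlt | hge
      · exact hlower v (by omega)
      rcases hv.lt_or_eq with hlt | rfl
      · exact hupper v (by omega) (by omega)
      · rwa [ZMod.natCast_self, ← hnm, Nat.add_sub_cancel] at *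
  · rintro ⟨hchain, hsum⟩
    have hstep (v : ℕ) (hv : v ≤ n) (hvm : v + 1 ≠ m) : ϱ v ≤ ϱ (v + 1 : ℕ) := by
      simpa [hval hv, hvm] using hchain v
    refine ⟨fun j _ hj => hstep j (by omega) (by omega), ?_,
      fun j hj => hstep j (by omega) (by omega), ?_, hsum⟩
    · simpa [← hnm] using hstep n le_rfl (by omega)
    · have hsucc : ((m - 1 : ℕ) : ZMod (n + 1)) + 1 = m := by
        rw [← Nat.cast_add_one, Nat.sub_add_cancel hm]
      simpa [hval (show m - 1 ≤ n by omega), Nat.sub_add_cancel hm, hsucc, add_comm] using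
        hchain (m - 1 : ℕ)

variable {γ ϱ : ZMod (n + 1) → ℝ}

theorem forall_sub_ge_neg_two_iff (hnm : n + 1 = 2 * m)
    (hγ : ∀ j, γ j = (n + 1) * ϱ j - todaShift n m j) :
    (∀ i, γ (i + 1) - γ i ≥ -2) ↔
      ∀ i : ZMod (n + 1), ϱ i ≤ ϱ (i + 1) + if i.val + 1 = m then 2 else 0 := by
  refine forall_congr' fun i => ?_
  have hpos : (0 : ℝ) < n + 1 := by positivity
  have hjump := todaShift_add_one_sub hnm i
  have key : γ (i + 1) - γ i + 2 =
      (n + 1) * (ϱ (i + 1) + (if i.val + 1 = m then 2 else 0) - ϱ i) := by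
    rw [hγ, hγ]
    split_ifs at hjump ⊢ <;> linear_combination -hjump
  calc γ (i + 1) - γ i ≥ -2
      ↔ 0 ≤ (n + 1) * (ϱ (i + 1) + (if i.val + 1 = m then 2 else 0) - ϱ i) := by
        rw [← key]; constructor <;> intro <;> linarith
    _ ↔ 0 ≤ ϱ (i + 1) + (if i.val + 1 = m then 2 else 0) - ϱ i :=
        mul_nonneg_iff_of_pos_left hpos
    _ ↔ _ := sub_nonneg

theorem forall_add_apply_sub_eq_zero_iff (hnm : n + 1 = 2 * m)
    (hγ : ∀ j, γ j = (n + 1) * ϱ j - todaShift n m j) :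
    (∀ i, γ i + γ ((n : ZMod (n + 1)) - i) = 0) ↔
      ∀ i, ϱ i + ϱ ((n : ZMod (n + 1)) - i) = 0 := by
  refine forall_congr' fun i => ?_
  have key : γ i + γ ((n : ZMod (n + 1)) - i) = (n + 1) * (ϱ i + ϱ ((n : ZMod (n + 1)) - i)) := by
    rw [hγ, hγ]
    linear_combination -todaShift_add_todaShift_sub hnm i
  rw [key, mul_eq_zero, or_iff_right (by positivity)]

end TodaShift

theorem stmt_15_general (n m : ℕ) (hnm : n + 1 = 2 * m)
    (A Ap : Set (ZMod (n + 1) → ℝ))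
    (hA : A = {ϱ |
      (∀ j : ℕ, m ≤ j → j + 1 ≤ 2 * m - 1 →
        ϱ ((j : ℕ) : ZMod (n + 1)) ≤ ϱ ((j + 1 : ℕ) : ZMod (n + 1))) ∧
      ϱ ((2 * m - 1 : ℕ) : ZMod (n + 1)) ≤ ϱ 0 ∧
      (∀ j : ℕ, j + 1 ≤ m - 1 →
        ϱ ((j : ℕ) : ZMod (n + 1)) ≤ ϱ ((j + 1 : ℕ) : ZMod (n + 1))) ∧
      ϱ ((m - 1 : ℕ) : ZMod (n + 1)) ≤ 2 + ϱ ((m : ℕ) : ZMod (n + 1)) ∧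
      ∑ i, ϱ i = 0})
    (hAp : Ap = {ϱ ∈ A | ∀ i, ϱ i + ϱ ((n : ZMod (n + 1)) - i) = 0}) :
    {γ : ZMod (n + 1) → ℝ | (∀ i, γ (i + 1) - γ i ≥ -2) ∧
      ∀ i, γ i + γ ((n : ZMod (n + 1)) - i) = 0} =
    {x | ∃ ϱ ∈ Ap, x = fun j : ZMod (n + 1) => (n + 1 : ℝ) * ϱ j -
      (if j.val < m then 2 * (j.val : ℝ) + 1 else -(2 * ((n - j.val : ℕ) : ℝ) + 1))} := by
  obtain rfl : A = alcove n m := hA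
  subst hAp
  ext γ
  constructor
  · rintro ⟨hstep, hsym⟩
    set ϱ : ZMod (n + 1) → ℝ := fun j => (γ j + todaShift n m j) / (n + 1)
    have hγ (j : ZMod (n + 1)) : γ j = (n + 1) * ϱ j - todaShift n m j := by
      simp only [ϱ]; field_simp; ring
    have hϱsym := (forall_add_apply_sub_eq_zero_iff hnm hγ).1 hsym
    refine ⟨ϱ, ⟨(mem_alcove_iff hnm ϱ).2 ⟨(forall_sub_ge_neg_two_iff hnm hγ).1 hstep, ?_⟩, hϱsym⟩,
      funext hγ⟩
    exact Fintype.sum_eq_zero_of_add_apply_sub_eq_zero _ hϱsym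
  · rintro ⟨ϱ, ⟨hϱ, hϱsym⟩, rfl⟩
    have hγ (j : ZMod (n + 1)) : _ = (n + 1) * ϱ j - todaShift n m j := rfl
    exact ⟨(forall_sub_ge_neg_two_iff hnm hγ).2 ((mem_alcove_iff hnm ϱ).1 hϱ).1,
      (forall_add_apply_sub_eq_zero_iff hnm hγ).2 hϱsym⟩

/-- for `n + 1 = 2m`, the region parametrizing the globally smooth
solutions of the tt*-Toda equations equals the image of the convex subset `𝔄^p` of the
Weyl alcove `𝔄` of `SU(n+1)` under scaling by `n+1` followed by translation by minus
the vector `(1, 3, …, 2m-1, 1-2m, …, -3, -1)`. -/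
theorem stmt_15 (n m : ℕ) (hm : 2 ≤ m) (hnm : n + 1 = 2 * m)
    (A Ap : Set (ZMod (n + 1) → ℝ))
    (hA : A = {ϱ |
      (∀ j : ℕ, m ≤ j → j + 1 ≤ 2 * m - 1 →
        ϱ ((j : ℕ) : ZMod (n + 1)) ≤ ϱ ((j + 1 : ℕ) : ZMod (n + 1))) ∧
      ϱ ((2 * m - 1 : ℕ) : ZMod (n + 1)) ≤ ϱ 0 ∧
      (∀ j : ℕ, j + 1 ≤ m - 1 →
        ϱ ((j : ℕ) : ZMod (n + 1)) ≤ ϱ ((j + 1 : ℕ) : ZMod (n + 1))) ∧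
      ϱ ((m - 1 : ℕ) : ZMod (n + 1)) ≤ 2 + ϱ ((m : ℕ) : ZMod (n + 1)) ∧
      ∑ i, ϱ i = 0})
    (hAp : Ap = {ϱ ∈ A | ∀ i, ϱ i + ϱ ((n : ZMod (n + 1)) - i) = 0}) :
    {γ : ZMod (n + 1) → ℝ | (∀ i, γ (i + 1) - γ i ≥ -2) ∧
      ∀ i, γ i + γ ((n : ZMod (n + 1)) - i) = 0} =
    {x | ∃ ϱ ∈ Ap, x = fun j : ZMod (n + 1) => (n + 1 : ℝ) * ϱ j -
      (if j.val < m then 2 * (j.val : ℝ) + 1 else -(2 * ((n - j.val : ℕ) : ℝ) + 1))} :=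
  stmt_15_general n m hnm A Ap hA hAp
end
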